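/- arXiv:1211.5859 — 2 statements merged into one kernel-verified Lean document; each statement's English description precedes it below -/
import Mathlib

section
/- For the 2-form ω = dt₁∧dt₂ − 2x₁(dt₃∧dx₁ + dx₂∧dx₃) + x₂(dt₃∧dx₂ − dx₁∧dx₃) + x₃(dt₃∧dx₃ + dx₁∧dx₂) on ℝ⁶, one has ω∧ω∧ω > 0 (as a multiple of the standard volume form) at every point with (x₁,x₂,x₃) ≠ (0,0,0), and ω∧ω = 0 precisely on the set Z = {x₁ = x₂ = x₃ = 0}. -/
open Matrix

noncomputable section

/-- The antisymmetric coefficient matrix of the 2-form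
`ω = dt₁∧dt₂ − 2x₁(dt₃∧dx₁ + dx₂∧dx₃) + x₂(dt₃∧dx₂ − dx₁∧dx₃) + x₃(dt₃∧dx₃ + dx₁∧dx₂)`
on `ℝ⁶` with coordinates `(t₁,t₂,t₃,x₁,x₂,x₃) = (p 0, …, p 5)`. -/
def omegaMat (p : Fin 6 → ℝ) : Matrix (Fin 6) (Fin 6) ℝ :=
  !![0, 1, 0, 0, 0, 0;
     -1, 0, 0, 0, 0, 0;
     0, 0, 0, -2 * p 3, p 4, p 5;
     0, 0, 2 * p 3, 0, p 5, -(p 4);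
     0, 0, -(p 4), -(p 5), 0, -2 * p 3;
     0, 0, -(p 5), p 4, 2 * p 3, 0]

/-- The value `ω_p(u,w)` of the 2-form on a pair of vectors. -/
def omegaEv (p u w : Fin 6 → ℝ) : ℝ := u ⬝ᵥ (omegaMat p) *ᵥ w

/-- The 4-form `ω∧ω` evaluated at `p` on a quadruple of vectors
(a positive multiple of the usual normalization). -/
def wedgeSq (p : Fin 6 → ℝ) (v : Fin 4 → Fin 6 → ℝ) : ℝ :=
  ∑ σ : Equiv.Perm (Fin 4),
    ((Equiv.Perm.sign σ : ℤ) : ℝ) *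
      omegaEv p (v (σ 0)) (v (σ 1)) * omegaEv p (v (σ 2)) (v (σ 3))

/-- The coefficient of the 6-form `ω∧ω∧ω` with respect to the standard volume form
`dt₁∧dt₂∧dt₃∧dx₁∧dx₂∧dx₃` (a positive multiple of the usual normalization). -/
def tripleSelfWedge (p : Fin 6 → ℝ) : ℝ :=
  ∑ σ : Equiv.Perm (Fin 6),
    ((Equiv.Perm.sign σ : ℤ) : ℝ) *
      omegaMat p (σ 0) (σ 1) * omegaMat p (σ 2) (σ 3) * omegaMat p (σ 4) (σ 5)

/-! ### Auxiliary machinery for evaluating sums over permutation groups -/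

lemma permSum_succ {n : ℕ} {M : Type*} [AddCommMonoid M] (f : Equiv.Perm (Fin (n+1)) → M) :
    ∑ σ : Equiv.Perm (Fin (n+1)), f σ
      = ∑ i : Fin (n+1), ∑ τ : Equiv.Perm (Fin n), f (Equiv.Perm.decomposeFin.symm (i, τ)) := by
  rw [Finset.univ_perm_fin_succ, Finset.sum_map, Fintype.sum_prod_type]
  rfl

lemma permSum_zero {M : Type*} [AddCommMonoid M] (f : Equiv.Perm (Fin 0) → M) :
    ∑ σ : Equiv.Perm (Fin 0), f σ = f 1 := by
  rw [Finset.sum_eq_single_of_mem 1 (Finset.mem_univ _)]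
  intro b _ hb
  exact absurd (Subsingleton.elim b 1) hb

lemma app2_1 (p : Fin 2) (e : Equiv.Perm (Fin 1)) :
    Equiv.Perm.decomposeFin.symm (p, e) 1 = Equiv.swap 0 p (e 0).succ := by
  rw [show (1 : Fin 2) = Fin.succ 0 from rfl, Equiv.Perm.decomposeFin_symm_apply_succ]

lemma app3_1 (p : Fin 3) (e : Equiv.Perm (Fin 2)) :
    Equiv.Perm.decomposeFin.symm (p, e) 1 = Equiv.swap 0 p (e 0).succ := by
  rw [show (1 : Fin 3) = Fin.succ 0 from rfl, Equiv.Perm.decomposeFin_symm_apply_succ]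

lemma app3_2 (p : Fin 3) (e : Equiv.Perm (Fin 2)) :
    Equiv.Perm.decomposeFin.symm (p, e) 2 = Equiv.swap 0 p (e 1).succ := by
  rw [show (2 : Fin 3) = Fin.succ 1 from rfl, Equiv.Perm.decomposeFin_symm_apply_succ]

lemma app4_1 (p : Fin 4) (e : Equiv.Perm (Fin 3)) :
    Equiv.Perm.decomposeFin.symm (p, e) 1 = Equiv.swap 0 p (e 0).succ := by
  rw [show (1 : Fin 4) = Fin.succ 0 from rfl, Equiv.Perm.decomposeFin_symm_apply_succ]

lemma app4_2 (p : Fin 4) (e : Equiv.Perm (Fin 3)) :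
    Equiv.Perm.decomposeFin.symm (p, e) 2 = Equiv.swap 0 p (e 1).succ := by
  rw [show (2 : Fin 4) = Fin.succ 1 from rfl, Equiv.Perm.decomposeFin_symm_apply_succ]

lemma app4_3 (p : Fin 4) (e : Equiv.Perm (Fin 3)) :
    Equiv.Perm.decomposeFin.symm (p, e) 3 = Equiv.swap 0 p (e 2).succ := by
  rw [show (3 : Fin 4) = Fin.succ 2 from rfl, Equiv.Perm.decomposeFin_symm_apply_succ]

lemma app5_1 (p : Fin 5) (e : Equiv.Perm (Fin 4)) :
    Equiv.Perm.decomposeFin.symm (p, e) 1 = Equiv.swap 0 p (e 0).succ := by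
  rw [show (1 : Fin 5) = Fin.succ 0 from rfl, Equiv.Perm.decomposeFin_symm_apply_succ]

lemma app5_2 (p : Fin 5) (e : Equiv.Perm (Fin 4)) :
    Equiv.Perm.decomposeFin.symm (p, e) 2 = Equiv.swap 0 p (e 1).succ := by
  rw [show (2 : Fin 5) = Fin.succ 1 from rfl, Equiv.Perm.decomposeFin_symm_apply_succ]

lemma app5_3 (p : Fin 5) (e : Equiv.Perm (Fin 4)) :
    Equiv.Perm.decomposeFin.symm (p, e) 3 = Equiv.swap 0 p (e 2).succ := by
  rw [show (3 : Fin 5) = Fin.succ 2 from rfl, Equiv.Perm.decomposeFin_symm_apply_succ]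

lemma app5_4 (p : Fin 5) (e : Equiv.Perm (Fin 4)) :
    Equiv.Perm.decomposeFin.symm (p, e) 4 = Equiv.swap 0 p (e 3).succ := by
  rw [show (4 : Fin 5) = Fin.succ 3 from rfl, Equiv.Perm.decomposeFin_symm_apply_succ]

lemma app6_1 (p : Fin 6) (e : Equiv.Perm (Fin 5)) :
    Equiv.Perm.decomposeFin.symm (p, e) 1 = Equiv.swap 0 p (e 0).succ := by
  rw [show (1 : Fin 6) = Fin.succ 0 from rfl, Equiv.Perm.decomposeFin_symm_apply_succ]

lemma app6_2 (p : Fin 6) (e : Equiv.Perm (Fin 5)) :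
    Equiv.Perm.decomposeFin.symm (p, e) 2 = Equiv.swap 0 p (e 1).succ := by
  rw [show (2 : Fin 6) = Fin.succ 1 from rfl, Equiv.Perm.decomposeFin_symm_apply_succ]

lemma app6_3 (p : Fin 6) (e : Equiv.Perm (Fin 5)) :
    Equiv.Perm.decomposeFin.symm (p, e) 3 = Equiv.swap 0 p (e 2).succ := by
  rw [show (3 : Fin 6) = Fin.succ 2 from rfl, Equiv.Perm.decomposeFin_symm_apply_succ]

lemma app6_4 (p : Fin 6) (e : Equiv.Perm (Fin 5)) :
    Equiv.Perm.decomposeFin.symm (p, e) 4 = Equiv.swap 0 p (e 3).succ := by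
  rw [show (4 : Fin 6) = Fin.succ 3 from rfl, Equiv.Perm.decomposeFin_symm_apply_succ]

lemma app6_5 (p : Fin 6) (e : Equiv.Perm (Fin 5)) :
    Equiv.Perm.decomposeFin.symm (p, e) 5 = Equiv.swap 0 p (e 4).succ := by
  rw [show (5 : Fin 6) = Fin.succ 4 from rfl, Equiv.Perm.decomposeFin_symm_apply_succ]

lemma succ1_0 : Fin.succ (0 : Fin 1) = (1 : Fin 2) := rfl
lemma succ2_0 : Fin.succ (0 : Fin 2) = (1 : Fin 3) := rfl
lemma succ2_1 : Fin.succ (1 : Fin 2) = (2 : Fin 3) := rfl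
lemma succ3_0 : Fin.succ (0 : Fin 3) = (1 : Fin 4) := rfl
lemma succ3_1 : Fin.succ (1 : Fin 3) = (2 : Fin 4) := rfl
lemma succ3_2 : Fin.succ (2 : Fin 3) = (3 : Fin 4) := rfl
lemma succ4_0 : Fin.succ (0 : Fin 4) = (1 : Fin 5) := rfl
lemma succ4_1 : Fin.succ (1 : Fin 4) = (2 : Fin 5) := rfl
lemma succ4_2 : Fin.succ (2 : Fin 4) = (3 : Fin 5) := rfl
lemma succ4_3 : Fin.succ (3 : Fin 4) = (4 : Fin 5) := rfl
lemma succ5_0 : Fin.succ (0 : Fin 5) = (1 : Fin 6) := rfl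
lemma succ5_1 : Fin.succ (1 : Fin 5) = (2 : Fin 6) := rfl
lemma succ5_2 : Fin.succ (2 : Fin 5) = (3 : Fin 6) := rfl
lemma succ5_3 : Fin.succ (3 : Fin 5) = (4 : Fin 6) := rfl
lemma succ5_4 : Fin.succ (4 : Fin 5) = (5 : Fin 6) := rfl

lemma omegaMat_00 (p : Fin 6 → ℝ) : omegaMat p 0 0 = 0 := rfl
lemma omegaMat_01 (p : Fin 6 → ℝ) : omegaMat p 0 1 = 1 := rfl
lemma omegaMat_02 (p : Fin 6 → ℝ) : omegaMat p 0 2 = 0 := rfl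
lemma omegaMat_03 (p : Fin 6 → ℝ) : omegaMat p 0 3 = 0 := rfl
lemma omegaMat_04 (p : Fin 6 → ℝ) : omegaMat p 0 4 = 0 := rfl
lemma omegaMat_05 (p : Fin 6 → ℝ) : omegaMat p 0 5 = 0 := rfl
lemma omegaMat_10 (p : Fin 6 → ℝ) : omegaMat p 1 0 = -1 := rfl
lemma omegaMat_11 (p : Fin 6 → ℝ) : omegaMat p 1 1 = 0 := rfl
lemma omegaMat_12 (p : Fin 6 → ℝ) : omegaMat p 1 2 = 0 := rfl
lemma omegaMat_13 (p : Fin 6 → ℝ) : omegaMat p 1 3 = 0 := rfl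
lemma omegaMat_14 (p : Fin 6 → ℝ) : omegaMat p 1 4 = 0 := rfl
lemma omegaMat_15 (p : Fin 6 → ℝ) : omegaMat p 1 5 = 0 := rfl
lemma omegaMat_20 (p : Fin 6 → ℝ) : omegaMat p 2 0 = 0 := rfl
lemma omegaMat_21 (p : Fin 6 → ℝ) : omegaMat p 2 1 = 0 := rfl
lemma omegaMat_22 (p : Fin 6 → ℝ) : omegaMat p 2 2 = 0 := rfl
lemma omegaMat_23 (p : Fin 6 → ℝ) : omegaMat p 2 3 = -2 * p 3 := rfl
lemma omegaMat_24 (p : Fin 6 → ℝ) : omegaMat p 2 4 = p 4 := rfl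
lemma omegaMat_25 (p : Fin 6 → ℝ) : omegaMat p 2 5 = p 5 := rfl
lemma omegaMat_30 (p : Fin 6 → ℝ) : omegaMat p 3 0 = 0 := rfl
lemma omegaMat_31 (p : Fin 6 → ℝ) : omegaMat p 3 1 = 0 := rfl
lemma omegaMat_32 (p : Fin 6 → ℝ) : omegaMat p 3 2 = 2 * p 3 := rfl
lemma omegaMat_33 (p : Fin 6 → ℝ) : omegaMat p 3 3 = 0 := rfl
lemma omegaMat_34 (p : Fin 6 → ℝ) : omegaMat p 3 4 = p 5 := rfl
lemma omegaMat_35 (p : Fin 6 → ℝ) : omegaMat p 3 5 = -(p 4) := rfl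
lemma omegaMat_40 (p : Fin 6 → ℝ) : omegaMat p 4 0 = 0 := rfl
lemma omegaMat_41 (p : Fin 6 → ℝ) : omegaMat p 4 1 = 0 := rfl
lemma omegaMat_42 (p : Fin 6 → ℝ) : omegaMat p 4 2 = -(p 4) := rfl
lemma omegaMat_43 (p : Fin 6 → ℝ) : omegaMat p 4 3 = -(p 5) := rfl
lemma omegaMat_44 (p : Fin 6 → ℝ) : omegaMat p 4 4 = 0 := rfl
lemma omegaMat_45 (p : Fin 6 → ℝ) : omegaMat p 4 5 = -2 * p 3 := rfl
lemma omegaMat_50 (p : Fin 6 → ℝ) : omegaMat p 5 0 = 0 := rfl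
lemma omegaMat_51 (p : Fin 6 → ℝ) : omegaMat p 5 1 = 0 := rfl
lemma omegaMat_52 (p : Fin 6 → ℝ) : omegaMat p 5 2 = -(p 5) := rfl
lemma omegaMat_53 (p : Fin 6 → ℝ) : omegaMat p 5 3 = p 4 := rfl
lemma omegaMat_54 (p : Fin 6 → ℝ) : omegaMat p 5 4 = 2 * p 3 := rfl
lemma omegaMat_55 (p : Fin 6 → ℝ) : omegaMat p 5 5 = 0 := rfl

set_option maxHeartbeats 2000000 in
lemma tripleSelfWedge_eq (p : Fin 6 → ℝ) :
    tripleSelfWedge p = 48 * (4 * p 3 ^ 2 + p 4 ^ 2 + p 5 ^ 2) := by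
  rw [tripleSelfWedge]
  simp only [permSum_succ, permSum_zero]
  simp only [Nat.reduceAdd, Fin.sum_univ_six, Fin.sum_univ_five, Fin.sum_univ_four,
    Fin.sum_univ_three, Fin.sum_univ_two, Fin.sum_univ_one]
  simp only [Equiv.Perm.decomposeFin.symm_sign, Equiv.Perm.sign_one,
    Equiv.Perm.decomposeFin_symm_apply_zero,
    app6_1, app6_2, app6_3, app6_4, app6_5, app5_1, app5_2, app5_3, app5_4, app4_1, app4_2, app4_3, app3_1, app3_2, app2_1,
    Equiv.Perm.one_apply,
    succ1_0, succ2_0, succ2_1, succ3_0, succ3_1, succ3_2, succ4_0, succ4_1, succ4_2, succ4_3, succ5_0, succ5_1, succ5_2, succ5_3, succ5_4,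
    Equiv.swap_apply_def, reduceIte, Fin.reduceEq]
  simp only [omegaMat_00, omegaMat_01, omegaMat_02, omegaMat_03, omegaMat_04, omegaMat_05, omegaMat_10, omegaMat_11, omegaMat_12, omegaMat_13, omegaMat_14, omegaMat_15, omegaMat_20, omegaMat_21, omegaMat_22, omegaMat_23, omegaMat_24, omegaMat_25, omegaMat_30, omegaMat_31, omegaMat_32, omegaMat_33, omegaMat_34, omegaMat_35, omegaMat_40, omegaMat_41, omegaMat_42, omegaMat_43, omegaMat_44, omegaMat_45, omegaMat_50, omegaMat_51, omegaMat_52, omegaMat_53, omegaMat_54, omegaMat_55, Units.val_one, Units.val_neg, Units.val_mul, Int.cast_one,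
    Int.cast_neg, Int.cast_mul, mul_zero, zero_mul, mul_one, one_mul, neg_mul, mul_neg,
    neg_neg, add_zero, zero_add, neg_zero]
  ring

lemma omegaEv_single (p : Fin 6 → ℝ) (a b : Fin 6) :
    omegaEv p (Pi.single a 1) (Pi.single b 1) = omegaMat p a b := by
  simp [omegaEv, Matrix.mulVec_single, single_dotProduct]

lemma vec4_0 (a b c d : Fin 6 → ℝ) : ![a, b, c, d] 0 = a := rfl
lemma vec4_1 (a b c d : Fin 6 → ℝ) : ![a, b, c, d] 1 = b := rfl
lemma vec4_2 (a b c d : Fin 6 → ℝ) : ![a, b, c, d] 2 = c := rfl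
lemma vec4_3 (a b c d : Fin 6 → ℝ) : ![a, b, c, d] 3 = d := rfl

set_option maxHeartbeats 1000000 in
lemma wedgeSq_single (p : Fin 6 → ℝ) :
    wedgeSq p ![Pi.single 2 1, Pi.single 3 1, Pi.single 4 1, Pi.single 5 1]
      = 8 * (4 * p 3 ^ 2 + p 4 ^ 2 + p 5 ^ 2) := by
  rw [wedgeSq]
  simp only [permSum_succ, permSum_zero]
  simp only [Nat.reduceAdd, Fin.sum_univ_four, Fin.sum_univ_three, Fin.sum_univ_two,
    Fin.sum_univ_one]
  simp only [Equiv.Perm.decomposeFin.symm_sign, Equiv.Perm.sign_one,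
    Equiv.Perm.decomposeFin_symm_apply_zero,
    app4_1, app4_2, app4_3, app3_1, app3_2, app2_1,
    Equiv.Perm.one_apply,
    succ1_0, succ2_0, succ2_1, succ3_0, succ3_1, succ3_2,
    Equiv.swap_apply_def, reduceIte, Fin.reduceEq]
  simp only [vec4_0, vec4_1, vec4_2, vec4_3, omegaEv_single]
  simp only [omegaMat_00, omegaMat_01, omegaMat_02, omegaMat_03, omegaMat_04, omegaMat_05, omegaMat_10, omegaMat_11, omegaMat_12, omegaMat_13, omegaMat_14, omegaMat_15, omegaMat_20, omegaMat_21, omegaMat_22, omegaMat_23, omegaMat_24, omegaMat_25, omegaMat_30, omegaMat_31, omegaMat_32, omegaMat_33, omegaMat_34, omegaMat_35, omegaMat_40, omegaMat_41, omegaMat_42, omegaMat_43, omegaMat_44, omegaMat_45, omegaMat_50, omegaMat_51, omegaMat_52, omegaMat_53, omegaMat_54, omegaMat_55, Units.val_one, Units.val_neg, Units.val_mul, Int.cast_one,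
    Int.cast_neg, Int.cast_mul, mul_zero, zero_mul, mul_one, one_mul, neg_mul, mul_neg,
    neg_neg, add_zero, zero_add, neg_zero]
  ring

lemma omegaEv_of_zero (p u w : Fin 6 → ℝ) (h3 : p 3 = 0) (h4 : p 4 = 0) (h5 : p 5 = 0) :
    omegaEv p u w = u 0 * w 1 - u 1 * w 0 := by
  simp only [omegaEv, dotProduct, Matrix.mulVec, Fin.sum_univ_six,
    omegaMat_00, omegaMat_01, omegaMat_02, omegaMat_03, omegaMat_04, omegaMat_05, omegaMat_10, omegaMat_11, omegaMat_12, omegaMat_13, omegaMat_14, omegaMat_15, omegaMat_20, omegaMat_21, omegaMat_22, omegaMat_23, omegaMat_24, omegaMat_25, omegaMat_30, omegaMat_31, omegaMat_32, omegaMat_33, omegaMat_34, omegaMat_35, omegaMat_40, omegaMat_41, omegaMat_42, omegaMat_43, omegaMat_44, omegaMat_45, omegaMat_50, omegaMat_51, omegaMat_52, omegaMat_53, omegaMat_54, omegaMat_55, h3, h4, h5]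
  ring

set_option maxHeartbeats 1000000 in
lemma wedgeSq_of_zero (p : Fin 6 → ℝ) (h3 : p 3 = 0) (h4 : p 4 = 0) (h5 : p 5 = 0)
    (v : Fin 4 → Fin 6 → ℝ) : wedgeSq p v = 0 := by
  rw [wedgeSq]
  simp only [omegaEv_of_zero p _ _ h3 h4 h5]
  simp only [permSum_succ, permSum_zero]
  simp only [Nat.reduceAdd, Fin.sum_univ_four, Fin.sum_univ_three, Fin.sum_univ_two,
    Fin.sum_univ_one]
  simp only [Equiv.Perm.decomposeFin.symm_sign, Equiv.Perm.sign_one,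
    Equiv.Perm.decomposeFin_symm_apply_zero,
    app4_1, app4_2, app4_3, app3_1, app3_2, app2_1,
    Equiv.Perm.one_apply,
    succ1_0, succ2_0, succ2_1, succ3_0, succ3_1, succ3_2,
    Equiv.swap_apply_def, reduceIte, Fin.reduceEq]
  simp only [Units.val_one, Units.val_neg, Units.val_mul, Int.cast_one,
    Int.cast_neg, Int.cast_mul]
  ring

/-- `ω∧ω∧ω > 0` at every point with `(x₁,x₂,x₃) ≠ (0,0,0)`, and
`ω∧ω = 0` precisely on the set `Z = {x₁ = x₂ = x₃ = 0}`. -/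
theorem omega_near_symplectic :
    (∀ p : Fin 6 → ℝ, (p 3 ≠ 0 ∨ p 4 ≠ 0 ∨ p 5 ≠ 0) → 0 < tripleSelfWedge p) ∧
    (∀ p : Fin 6 → ℝ,
      (∀ v : Fin 4 → Fin 6 → ℝ, wedgeSq p v = 0) ↔ (p 3 = 0 ∧ p 4 = 0 ∧ p 5 = 0)) := by
  constructor
  · intro p hp
    rw [tripleSelfWedge_eq]
    rcases hp with h | h | h <;>
      [have hh := mul_self_pos.mpr h; have hh := mul_self_pos.mpr h;
       have hh := mul_self_pos.mpr h] <;>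
    nlinarith [sq_nonneg (p 3), sq_nonneg (p 4), sq_nonneg (p 5)]
  · intro p
    constructor
    · intro h
      have key := h ![Pi.single 2 1, Pi.single 3 1, Pi.single 4 1, Pi.single 5 1]
      rw [wedgeSq_single] at key
      refine ⟨?_, ?_, ?_⟩ <;> nlinarith [sq_nonneg (p 3), sq_nonneg (p 4), sq_nonneg (p 5)]
    · rintro ⟨h3, h4, h5⟩ v
      exact wedgeSq_of_zero p h3 h4 h5 v
end
end

section
/- Let Σ be a compact surface with nonempty boundary, β a 1-form on Σ with dβ an area form, and φ: Σ → Σ an orientation-preserving diffeomorphism with φ*dβ = dβ. Let μ: [0,2π] → [0,1] be smooth with μ ≡ 1 near 0 and μ ≡ 0 near 2π, and set β̄ = μ(t)β + (1−μ(t))φ*β on the mapping torus Σ(φ) = Σ×[0,2π]/(x,0)∼(φ(x),2π). Then for all sufficiently large K > 0, the 1-form α₁ = β̄ + K·dt satisfies α₁∧dα₁ > 0, i.e., is a contact form on the 3-dimensional mapping torus. -/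
open Real Matrix

noncomputable section

/-- Partial derivative on the surface chart `ℝ²`. -/
def pd2 (f : (Fin 2 → ℝ) → ℝ) (p : Fin 2 → ℝ) (i : Fin 2) : ℝ :=
  fderiv ℝ f p (Pi.single i 1)

/-- The coefficient of `dβ` against the area form `dx⁰∧dx¹`. -/
def dbeta (β : (Fin 2 → ℝ) → Fin 2 → ℝ) (p : Fin 2 → ℝ) : ℝ :=
  pd2 (fun q => β q 1) p 0 - pd2 (fun q => β q 0) p 1

/-- The Jacobian matrix of a map `φ : ℝ² → ℝ²`. -/
def jac (φ : (Fin 2 → ℝ) → Fin 2 → ℝ) (p : Fin 2 → ℝ) : Matrix (Fin 2) (Fin 2) ℝ :=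
  Matrix.of fun i j => fderiv ℝ (fun q => φ q i) p (Pi.single j 1)

/-- The pullback `(φ*β)_i(p) = Σ_j β_j(φ(p)) ∂φ_j/∂x_i`. -/
def pbBeta (φ β : (Fin 2 → ℝ) → Fin 2 → ℝ) (p : Fin 2 → ℝ) : Fin 2 → ℝ :=
  fun i => ∑ j, β (φ p) j * jac φ p j i

/-- The coefficients of the 1-form `α₁ = β̄ + K dt` on the mapping torus
(in the chart `Σ × [0,2π]`, coordinates `(x⁰,x¹,t)`), where
`β̄ = μ(t)β + (1−μ(t))φ*β`. -/
def alphaOne (K : ℝ) (μ : ℝ → ℝ) (φ β : (Fin 2 → ℝ) → Fin 2 → ℝ)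
    (q : (Fin 2 → ℝ) × ℝ) : Fin 3 → ℝ :=
  ![μ q.2 * β q.1 0 + (1 - μ q.2) * pbBeta φ β q.1 0,
    μ q.2 * β q.1 1 + (1 - μ q.2) * pbBeta φ β q.1 1,
    K]

/-- Coordinate basis vectors of the chart `ℝ² × ℝ` of the mapping torus. -/
def bv3 : Fin 3 → (Fin 2 → ℝ) × ℝ :=
  ![(Pi.single 0 1, 0), (Pi.single 1 1, 0), (0, 1)]

/-- The coefficient of the 3-form `α₁ ∧ dα₁` against `dx⁰∧dx¹∧dt`
(a positive multiple of the usual normalization). -/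
def contactCoeff (K : ℝ) (μ : ℝ → ℝ) (φ β : (Fin 2 → ℝ) → Fin 2 → ℝ)
    (q : (Fin 2 → ℝ) × ℝ) : ℝ :=
  ∑ σ : Equiv.Perm (Fin 3),
    ((Equiv.Perm.sign σ : ℤ) : ℝ) * alphaOne K μ φ β q (σ 0) *
      (fderiv ℝ (fun r => alphaOne K μ φ β r (σ 2)) q (bv3 (σ 1))
        - fderiv ℝ (fun r => alphaOne K μ φ β r (σ 1)) q (bv3 (σ 2)))
def aFun (μ : ℝ → ℝ) (φ β : (Fin 2 → ℝ) → Fin 2 → ℝ) (j : Fin 2)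
    (q : (Fin 2 → ℝ) × ℝ) : ℝ :=
  μ q.2 * β q.1 j + (1 - μ q.2) * pbBeta φ β q.1 j

lemma alphaOne_zero (K : ℝ) (μ : ℝ → ℝ) (φ β : (Fin 2 → ℝ) → Fin 2 → ℝ) :
    (fun r => alphaOne K μ φ β r 0) = aFun μ φ β 0 := by
  funext r; simp [alphaOne, aFun]

lemma alphaOne_one (K : ℝ) (μ : ℝ → ℝ) (φ β : (Fin 2 → ℝ) → Fin 2 → ℝ) :
    (fun r => alphaOne K μ φ β r 1) = aFun μ φ β 1 := by
  funext r; simp [alphaOne, aFun]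

lemma contactCoeff_expand (K : ℝ) (μ : ℝ → ℝ) (φ β : (Fin 2 → ℝ) → Fin 2 → ℝ)
    (q : (Fin 2 → ℝ) × ℝ) :
    contactCoeff K μ φ β q =
      2 * (K * (fderiv ℝ (aFun μ φ β 1) q (bv3 0) - fderiv ℝ (aFun μ φ β 0) q (bv3 1))
        + aFun μ φ β 1 q * fderiv ℝ (aFun μ φ β 0) q (bv3 2)
        - aFun μ φ β 0 q * fderiv ℝ (aFun μ φ β 1) q (bv3 2)) := by
  have huniv : (Finset.univ : Finset (Equiv.Perm (Fin 3))) =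
    {Equiv.refl _, Equiv.swap 0 1, Equiv.swap 0 2, Equiv.swap 1 2,
     Equiv.swap 0 1 * Equiv.swap 1 2, Equiv.swap 1 2 * Equiv.swap 0 1} := by decide
  have hconst : (fun r => alphaOne K μ φ β r 2) = fun _ => K := by
    funext r; simp [alphaOne]
  have hA2 : alphaOne K μ φ β q 2 = K := by simp [alphaOne]
  have hA0 : alphaOne K μ φ β q 0 = aFun μ φ β 0 q := by simp [alphaOne, aFun]
  have hA1 : alphaOne K μ φ β q 1 = aFun μ φ β 1 q := by simp [alphaOne, aFun]
  unfold contactCoeff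
  rw [huniv, Finset.sum_insert (by decide), Finset.sum_insert (by decide),
    Finset.sum_insert (by decide), Finset.sum_insert (by decide),
    Finset.sum_insert (by decide), Finset.sum_singleton]
  have e1 : ((Equiv.refl (Fin 3)) : Equiv.Perm (Fin 3)) 0 = 0 := rfl
  simp only [show ((Equiv.refl (Fin 3) : Equiv.Perm (Fin 3)) : Equiv.Perm (Fin 3)) 0 = 0 from by decide,
    show ((Equiv.refl (Fin 3) : Equiv.Perm (Fin 3)) : Equiv.Perm (Fin 3)) 1 = 1 from by decide,
    show ((Equiv.refl (Fin 3) : Equiv.Perm (Fin 3)) : Equiv.Perm (Fin 3)) 2 = 2 from by decide,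
    show (Equiv.Perm.sign ((Equiv.refl (Fin 3) : Equiv.Perm (Fin 3)) : Equiv.Perm (Fin 3)) : ℤ) = 1 from by decide,
    show ((Equiv.swap (0:Fin 3) 1) : Equiv.Perm (Fin 3)) 0 = 1 from by decide,
    show ((Equiv.swap (0:Fin 3) 1) : Equiv.Perm (Fin 3)) 1 = 0 from by decide,
    show ((Equiv.swap (0:Fin 3) 1) : Equiv.Perm (Fin 3)) 2 = 2 from by decide,
    show (Equiv.Perm.sign ((Equiv.swap (0:Fin 3) 1) : Equiv.Perm (Fin 3)) : ℤ) = -1 from by decide,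
    show ((Equiv.swap (0:Fin 3) 2) : Equiv.Perm (Fin 3)) 0 = 2 from by decide,
    show ((Equiv.swap (0:Fin 3) 2) : Equiv.Perm (Fin 3)) 1 = 1 from by decide,
    show ((Equiv.swap (0:Fin 3) 2) : Equiv.Perm (Fin 3)) 2 = 0 from by decide,
    show (Equiv.Perm.sign ((Equiv.swap (0:Fin 3) 2) : Equiv.Perm (Fin 3)) : ℤ) = -1 from by decide,
    show ((Equiv.swap (1:Fin 3) 2) : Equiv.Perm (Fin 3)) 0 = 0 from by decide,
    show ((Equiv.swap (1:Fin 3) 2) : Equiv.Perm (Fin 3)) 1 = 2 from by decide,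
    show ((Equiv.swap (1:Fin 3) 2) : Equiv.Perm (Fin 3)) 2 = 1 from by decide,
    show (Equiv.Perm.sign ((Equiv.swap (1:Fin 3) 2) : Equiv.Perm (Fin 3)) : ℤ) = -1 from by decide,
    show ((Equiv.swap (0:Fin 3) 1 * Equiv.swap 1 2) : Equiv.Perm (Fin 3)) 0 = 1 from by decide,
    show ((Equiv.swap (0:Fin 3) 1 * Equiv.swap 1 2) : Equiv.Perm (Fin 3)) 1 = 2 from by decide,
    show ((Equiv.swap (0:Fin 3) 1 * Equiv.swap 1 2) : Equiv.Perm (Fin 3)) 2 = 0 from by decide,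
    show (Equiv.Perm.sign ((Equiv.swap (0:Fin 3) 1 * Equiv.swap 1 2) : Equiv.Perm (Fin 3)) : ℤ) = 1 from by decide,
    show ((Equiv.swap (1:Fin 3) 2 * Equiv.swap 0 1) : Equiv.Perm (Fin 3)) 0 = 2 from by decide,
    show ((Equiv.swap (1:Fin 3) 2 * Equiv.swap 0 1) : Equiv.Perm (Fin 3)) 1 = 0 from by decide,
    show ((Equiv.swap (1:Fin 3) 2 * Equiv.swap 0 1) : Equiv.Perm (Fin 3)) 2 = 1 from by decide,
    show (Equiv.Perm.sign ((Equiv.swap (1:Fin 3) 2 * Equiv.swap 0 1) : Equiv.Perm (Fin 3)) : ℤ) = 1 from by decide]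
  simp only [hconst, fderiv_const, fderiv_const_apply, Pi.zero_apply, ContinuousLinearMap.zero_apply, hA0, hA1, hA2,
    alphaOne_zero, alphaOne_one]
  push_cast
  ring

section Aux
variable {φ β : (Fin 2 → ℝ) → Fin 2 → ℝ} {μ : ℝ → ℝ}

lemma jac_smooth (hφs : ContDiff ℝ (⊤ : ℕ∞) φ) (k j : Fin 2) :
    ContDiff ℝ (⊤ : ℕ∞) (fun p => jac φ p k j) := by
  have h1 : ContDiff ℝ (⊤ : ℕ∞) (fun q => φ q k) := contDiff_pi.mp hφs k
  exact (h1.fderiv_right (by simp)).clm_apply contDiff_const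

lemma pb_smooth (hβs : ∀ i, ContDiff ℝ (⊤ : ℕ∞) fun p => β p i) (hφs : ContDiff ℝ (⊤ : ℕ∞) φ) (i : Fin 2) :
    ContDiff ℝ (⊤ : ℕ∞) (fun p => pbBeta φ β p i) := by
  unfold pbBeta
  exact ContDiff.sum fun j _ => ((hβs j).comp hφs).mul (jac_smooth hφs j i)

lemma a_smooth (hβs : ∀ i, ContDiff ℝ (⊤ : ℕ∞) fun p => β p i) (hφs : ContDiff ℝ (⊤ : ℕ∞) φ)
    (hμs : ContDiff ℝ (⊤ : ℕ∞) μ) (j : Fin 2) :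
    ContDiff ℝ (⊤ : ℕ∞) (aFun μ φ β j) := by
  unfold aFun
  exact ((hμs.comp contDiff_snd).mul ((hβs j).comp contDiff_fst)).add
    ((contDiff_const.sub (hμs.comp contDiff_snd)).mul
      ((pb_smooth hβs hφs j).comp contDiff_fst))

end Aux

section Aux2
variable {φ β : (Fin 2 → ℝ) → Fin 2 → ℝ} {μ : ℝ → ℝ}

lemma pi_decomp (v : Fin 2 → ℝ) :
    v = v 0 • (Pi.single 0 1 : Fin 2 → ℝ) + v 1 • (Pi.single 1 1 : Fin 2 → ℝ) := by
  funext m; fin_cases m <;> simp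

lemma clm_eval2 (L : (Fin 2 → ℝ) →L[ℝ] ℝ) (v : Fin 2 → ℝ) :
    L v = v 0 * L (Pi.single 0 1) + v 1 * L (Pi.single 1 1) := by
  conv_lhs => rw [pi_decomp v]
  simp

lemma fderiv_phi_apply (hφs : ContDiff ℝ (⊤ : ℕ∞) φ) (p : Fin 2 → ℝ) (i : Fin 2) :
    fderiv ℝ φ p (Pi.single i 1) = fun m => jac φ p m i := by
  have h : fderiv ℝ φ p = ContinuousLinearMap.pi
      (fun m => fderiv ℝ (fun q => φ q m) p) :=
    fderiv_pi (fun m => ((contDiff_pi.mp hφs m).differentiable (by simp)).differentiableAt)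
  rw [h]; rfl

lemma aFun_fderiv_space (hβs : ∀ i, ContDiff ℝ (⊤ : ℕ∞) fun p => β p i) (hφs : ContDiff ℝ (⊤ : ℕ∞) φ)
    (hμs : ContDiff ℝ (⊤ : ℕ∞) μ) (j i : Fin 2) (p : Fin 2 → ℝ) (t : ℝ) :
    fderiv ℝ (aFun μ φ β j) (p, t) ((Pi.single i 1 : Fin 2 → ℝ), (0 : ℝ)) =
      μ t * pd2 (fun q => β q j) p i + (1 - μ t) * pd2 (fun q => pbBeta φ β q j) p i := by
  have hbp : HasFDerivAt (fun r : (Fin 2 → ℝ) × ℝ => β r.1 j)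
      ((fderiv ℝ (fun q => β q j) p).comp (ContinuousLinearMap.fst ℝ _ _)) (p, t) :=
    ((((hβs j).differentiable (by simp)) p).hasFDerivAt).comp (f := Prod.fst) (p, t) hasFDerivAt_fst
  have hpbp : HasFDerivAt (fun r : (Fin 2 → ℝ) × ℝ => pbBeta φ β r.1 j)
      ((fderiv ℝ (fun q => pbBeta φ β q j) p).comp (ContinuousLinearMap.fst ℝ _ _)) (p, t) :=
    ((((pb_smooth hβs hφs j).differentiable (by simp)) p).hasFDerivAt).comp (f := Prod.fst) (p, t) hasFDerivAt_fst
  have hmp : HasFDerivAt (fun r : (Fin 2 → ℝ) × ℝ => μ r.2)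
      ((fderiv ℝ μ t).comp (ContinuousLinearMap.snd ℝ _ _)) (p, t) :=
    (((hμs.differentiable (by simp)) t).hasFDerivAt).comp (f := Prod.snd) (p, t) hasFDerivAt_snd
  have htot := (hmp.mul hbp).add ((hmp.const_sub 1).mul hpbp)
  have hfd : fderiv ℝ (aFun μ φ β j) (p, t) =
      (μ (p, t).2 • ((fderiv ℝ (fun q => β q j) p).comp (ContinuousLinearMap.fst ℝ _ _))
        + β (p, t).1 j • ((fderiv ℝ μ t).comp (ContinuousLinearMap.snd ℝ _ _)))
      + ((1 - μ (p, t).2) • ((fderiv ℝ (fun q => pbBeta φ β q j) p).comp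
            (ContinuousLinearMap.fst ℝ _ _))
        + pbBeta φ β (p, t).1 j • (-((fderiv ℝ μ t).comp (ContinuousLinearMap.snd ℝ _ _)))) :=
    htot.fderiv
  rw [hfd]
  simp [pd2]
end Aux2

section Aux3
variable {φ β : (Fin 2 → ℝ) → Fin 2 → ℝ}

lemma pd2_pb (hβs : ∀ i, ContDiff ℝ (⊤ : ℕ∞) fun p => β p i) (hφs : ContDiff ℝ (⊤ : ℕ∞) φ)
    (j i : Fin 2) (p : Fin 2 → ℝ) :
    pd2 (fun q => pbBeta φ β q j) p i =
      ∑ k, (β (φ p) k *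
          fderiv ℝ (fderiv ℝ (fun q => φ q k)) p (Pi.single i 1) (Pi.single j 1)
        + jac φ p k j * (jac φ p 0 i * pd2 (fun q => β q k) (φ p) 0
                        + jac φ p 1 i * pd2 (fun q => β q k) (φ p) 1)) := by
  have hφd : Differentiable ℝ φ := hφs.differentiable (by simp)
  have hterm : ∀ k : Fin 2, HasFDerivAt (fun q => β (φ q) k * jac φ q k j)
      (β (φ p) k • ((ContinuousLinearMap.apply ℝ ℝ ((Pi.single j 1 : Fin 2 → ℝ))).comp
          (fderiv ℝ (fderiv ℝ (fun q => φ q k)) p))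
        + jac φ p k j • ((fderiv ℝ (fun q => β q k) (φ p)).comp (fderiv ℝ φ p))) p := by
    intro k
    have h1 : HasFDerivAt (fun q => β (φ q) k)
        ((fderiv ℝ (fun q => β q k) (φ p)).comp (fderiv ℝ φ p)) p :=
      ((((hβs k).differentiable (by simp)) (φ p)).hasFDerivAt).comp p (hφd p).hasFDerivAt
    have h2 : HasFDerivAt (fun q => jac φ q k j)
        ((ContinuousLinearMap.apply ℝ ℝ ((Pi.single j 1 : Fin 2 → ℝ))).comp
          (fderiv ℝ (fderiv ℝ (fun q => φ q k)) p)) p := by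
      have hf : HasFDerivAt (fderiv ℝ (fun q => φ q k))
          (fderiv ℝ (fderiv ℝ (fun q => φ q k)) p) p :=
        ((((contDiff_pi.mp hφs k).fderiv_right (m := (⊤ : ℕ∞)) (by simp)).differentiable (by simp)) p).hasFDerivAt
      exact ((ContinuousLinearMap.apply ℝ ℝ
        ((Pi.single j 1 : Fin 2 → ℝ))).hasFDerivAt).comp p hf
    exact h1.mul h2
  have hsum : HasFDerivAt (fun q => pbBeta φ β q j)
      (∑ k, (β (φ p) k • ((ContinuousLinearMap.apply ℝ ℝ ((Pi.single j 1 : Fin 2 → ℝ))).comp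
          (fderiv ℝ (fderiv ℝ (fun q => φ q k)) p))
        + jac φ p k j • ((fderiv ℝ (fun q => β q k) (φ p)).comp (fderiv ℝ φ p)))) p :=
    HasFDerivAt.fun_sum (fun k _ => hterm k)
  unfold pd2
  rw [hsum.fderiv]
  rw [Fin.sum_univ_two, Fin.sum_univ_two]
  simp only [ContinuousLinearMap.add_apply, ContinuousLinearMap.smul_apply,
    ContinuousLinearMap.comp_apply, ContinuousLinearMap.apply_apply, smul_eq_mul,
    fderiv_phi_apply hφs]
  rw [clm_eval2 (fderiv ℝ (fun q => β q 0) (φ p)) (fun m => jac φ p m i),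
    clm_eval2 (fderiv ℝ (fun q => β q 1) (φ p)) (fun m => jac φ p m i)]

lemma dbeta_pb (hβs : ∀ i, ContDiff ℝ (⊤ : ℕ∞) fun p => β p i) (hφs : ContDiff ℝ (⊤ : ℕ∞) φ)
    (p : Fin 2 → ℝ) :
    dbeta (pbBeta φ β) p = dbeta β (φ p) * (jac φ p).det := by
  have hsymm : ∀ k : Fin 2,
      fderiv ℝ (fderiv ℝ (fun q => φ q k)) p (Pi.single 0 1) (Pi.single 1 1)
      = fderiv ℝ (fderiv ℝ (fun q => φ q k)) p (Pi.single 1 1) (Pi.single 0 1) := by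
    intro k
    exact ((contDiff_pi.mp hφs k).contDiffAt.isSymmSndFDerivAt (by rw [minSmoothness_of_isRCLikeNormedField]; exact WithTop.coe_le_coe.mpr (le_top : (2 : ℕ∞) ≤ ⊤))) _ _
  unfold dbeta
  rw [pd2_pb hβs hφs 1 0, pd2_pb hβs hφs 0 1, Matrix.det_fin_two,
    Fin.sum_univ_two, Fin.sum_univ_two, hsymm 0, hsymm 1]
  ring
end Aux3

/-- let `Σ` be a compact surface (with boundary), `β` a 1-form with `dβ`
an area form, `φ` an orientation-preserving diffeomorphism of `Σ` with `φ*dβ = dβ`,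
and `μ` a smooth cut-off with `μ ≡ 1` near `0` and `μ ≡ 0` near `2π`. Then for all
sufficiently large `K > 0`, the 1-form `α₁ = β̄ + K·dt` (with
`β̄ = μ(t)β + (1−μ(t))φ*β`) satisfies `α₁∧dα₁ > 0` on the mapping torus `Σ(φ)`. -/
theorem mapping_torus_contact
    (S : Set (Fin 2 → ℝ)) (hS : IsCompact S)
    (β : (Fin 2 → ℝ) → Fin 2 → ℝ) (hβs : ∀ i, ContDiff ℝ (⊤ : ℕ∞) fun p => β p i)
    (harea : ∀ p ∈ S, 0 < dbeta β p)
    (φ ψ : (Fin 2 → ℝ) → Fin 2 → ℝ)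
    (hφs : ContDiff ℝ (⊤ : ℕ∞) φ) (hψs : ContDiff ℝ (⊤ : ℕ∞) ψ)
    (hinv : Function.LeftInverse ψ φ ∧ Function.RightInverse ψ φ)
    (hφS : φ '' S = S)
    -- φ is orientation preserving
    (hor : ∀ p ∈ S, 0 < (jac φ p).det)
    -- φ preserves the area form dβ
    (hpres : ∀ p ∈ S, dbeta β (φ p) * (jac φ p).det = dbeta β p)
    (μ : ℝ → ℝ) (hμs : ContDiff ℝ (⊤ : ℕ∞) μ) (hμrange : ∀ t, μ t ∈ Set.Icc (0 : ℝ) 1)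
    (hμ01 : ∃ δ > 0, (∀ t ≤ δ, μ t = 1) ∧ (∀ t ≥ 2 * π - δ, μ t = 0)) :
    ∃ K₀ : ℝ, 0 < K₀ ∧ ∀ K ≥ K₀, ∀ p ∈ S, ∀ t ∈ Set.Icc (0 : ℝ) (2 * π),
      0 < contactCoeff K μ φ β (p, t) := by
  classical
  rcases S.eq_empty_or_nonempty with hSE | hSne
  · exact ⟨1, one_pos, fun K _ p hp => by rw [hSE] at hp; exact absurd hp (Set.notMem_empty p)⟩
  -- the "curl" of `β̄` in the surface directions equals the area density `dbeta β p`
  have hcurl : ∀ p ∈ S, ∀ t : ℝ,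
      fderiv ℝ (aFun μ φ β 1) (p, t) (bv3 0)
        - fderiv ℝ (aFun μ φ β 0) (p, t) (bv3 1) = dbeta β p := by
    intro p hp t
    have h0 : bv3 0 = ((Pi.single 0 1 : Fin 2 → ℝ), (0 : ℝ)) := by simp [bv3]
    have h1 : bv3 1 = ((Pi.single 1 1 : Fin 2 → ℝ), (0 : ℝ)) := by simp [bv3]
    rw [h0, h1, aFun_fderiv_space hβs hφs hμs 1 0 p t,
      aFun_fderiv_space hβs hφs hμs 0 1 p t]
    have e1 : pd2 (fun q => pbBeta φ β q 1) p 0 - pd2 (fun q => pbBeta φ β q 0) p 1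
        = dbeta β p := by
      have hpb : dbeta (pbBeta φ β) p = dbeta β p := by
        rw [dbeta_pb hβs hφs p, hpres p hp]
      exact hpb
    have e2 : pd2 (fun q => β q 1) p 0 - pd2 (fun q => β q 0) p 1 = dbeta β p := rfl
    linear_combination μ t * e2 + (1 - μ t) * e1
  -- the remaining terms of the contact coefficient are bounded on the compact torus
  have h0s := a_smooth hβs hφs hμs (0 : Fin 2)
  have h1s := a_smooth hβs hφs hμs (1 : Fin 2)
  set E : (Fin 2 → ℝ) × ℝ → ℝ := fun q =>
    aFun μ φ β 1 q * fderiv ℝ (aFun μ φ β 0) q (bv3 2)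
      - aFun μ φ β 0 q * fderiv ℝ (aFun μ φ β 1) q (bv3 2) with hE
  have hEc : Continuous E :=
    (h1s.continuous.mul (((h0s.fderiv_right (m := (⊤ : ℕ∞)) (by simp)).clm_apply contDiff_const).continuous)).sub
      (h0s.continuous.mul (((h1s.fderiv_right (m := (⊤ : ℕ∞)) (by simp)).clm_apply contDiff_const).continuous))
  have hC : IsCompact (S ×ˢ Set.Icc (0 : ℝ) (2 * π)) := hS.prod isCompact_Icc
  obtain ⟨M, hM⟩ := hC.exists_bound_of_continuousOn hEc.continuousOn
  have hM0 : 0 ≤ M := by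
    obtain ⟨p₁, hp₁⟩ := hSne
    exact le_trans (norm_nonneg _)
      (hM (p₁, 0) ⟨hp₁, Set.mem_Icc.mpr ⟨le_refl 0, by positivity⟩⟩)
  -- the minimum of the area density on `S`
  have hdbc : Continuous (dbeta β) := by
    have c1 : Continuous fun p => fderiv ℝ (fun q => β q 1) p (Pi.single 0 1) :=
      (((hβs 1).fderiv_right (m := (⊤ : ℕ∞)) (by simp)).clm_apply contDiff_const).continuous
    have c0 : Continuous fun p => fderiv ℝ (fun q => β q 0) p (Pi.single 1 1) :=
      (((hβs 0).fderiv_right (m := (⊤ : ℕ∞)) (by simp)).clm_apply contDiff_const).continuous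
    exact c1.sub c0
  obtain ⟨p₀, hp₀S, hp₀min⟩ := hS.exists_isMinOn hSne hdbc.continuousOn
  have hm : 0 < dbeta β p₀ := harea p₀ hp₀S
  set m := dbeta β p₀ with hmdef
  refine ⟨max 1 ((M + 1) / m), lt_of_lt_of_le one_pos (le_max_left _ _), ?_⟩
  intro K hK p hp t ht
  have hK1 : (1 : ℝ) ≤ K := le_trans (le_max_left _ _) hK
  have hKM : (M + 1) / m ≤ K := le_trans (le_max_right _ _) hK
  have hEb := hM (p, t) ⟨hp, ht⟩
  rw [hE] at hEb
  simp only [Real.norm_eq_abs] at hEb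
  have hEb' := (abs_le.mp hEb).1
  have hD : m ≤ dbeta β p := hp₀min hp
  rw [contactCoeff_expand, hcurl p hp t]
  have hKm : M + 1 ≤ K * dbeta β p := by
    have s1 : (M + 1) / m * m ≤ K * m :=
      mul_le_mul_of_nonneg_right hKM hm.le
    have s2 : K * m ≤ K * dbeta β p :=
      mul_le_mul_of_nonneg_left hD (le_trans zero_le_one hK1)
    have s3 : (M + 1) / m * m = M + 1 := div_mul_cancel₀ _ hm.ne'
    linarith
  linarith
end
end
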